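/- Let G=(V,E) be a graph with maximum degree 3 and V = {v_1,...,v_n}. Construct G' by adding, for each i, new vertices p_i, q_i, r_i, s_i, t_i and edges (v_i,q_i), (q_i,p_i), (v_i,r_i), (r_i,s_i), (r_i,t_i). If D* is a minimum independent dominating set of G and S* is a minimum independent secure dominating set of G', then |S*| = |D*| + 3n. -/

import Mathlib

variable {V : Type*} [Fintype V] [DecidableEq V]

/-- `S` is a dominating set of `G`: every vertex is in `S` or adjacent to a vertex of `S`. -/
def DomSet (G : SimpleGraph V) (S : Finset V) : Prop :=
  ∀ v : V, v ∈ S ∨ ∃ u ∈ S, G.Adj u v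

/-- `S` is a secure dominating set of `G`. -/
def SecDomSet (G : SimpleGraph V) (S : Finset V) : Prop :=
  DomSet G S ∧ ∀ u ∉ S, ∃ v ∈ S, G.Adj u v ∧ DomSet G (insert u (S.erase v))

/-- `S` is an independent set of `G`. -/
def IndepSet (G : SimpleGraph V) (S : Finset V) : Prop :=
  ∀ a ∈ S, ∀ b ∈ S, ¬ G.Adj a b

/-- `S` is an independent secure dominating set of `G`. -/
def InSDS (G : SimpleGraph V) (S : Finset V) : Prop :=
  IndepSet G S ∧ SecDomSet G S

/-- The independent secure domination number `γ_is(G)`. -/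
noncomputable def gammaIS (G : SimpleGraph V) : ℕ :=
  sInf {k | ∃ S : Finset V, InSDS G S ∧ S.card = k}

/-- The graph `G'` of the APX-hardness reduction: to each vertex `vᵢ` attach
`pᵢ = (i,0)`, `qᵢ = (i,1)`, `rᵢ = (i,2)`, `sᵢ = (i,3)`, `tᵢ = (i,4)` with edges
`(vᵢ,qᵢ), (qᵢ,pᵢ), (vᵢ,rᵢ), (rᵢ,sᵢ), (rᵢ,tᵢ)`. -/
def apxGraph (G : SimpleGraph V) : SimpleGraph (V ⊕ V × Fin 5) :=
  SimpleGraph.fromRel (fun x y =>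
    (∃ a b, x = Sum.inl a ∧ y = Sum.inl b ∧ G.Adj a b) ∨
    (∃ a, x = Sum.inl a ∧ y = Sum.inr (a, 1)) ∨
    (∃ a, x = Sum.inr (a, 1) ∧ y = Sum.inr (a, 0)) ∨
    (∃ a, x = Sum.inl a ∧ y = Sum.inr (a, 2)) ∨
    (∃ a, x = Sum.inr (a, 2) ∧ y = Sum.inr (a, 3)) ∨
    (∃ a, x = Sum.inr (a, 2) ∧ y = Sum.inr (a, 4)))

/-!
In an independent secure dominating set `S` of `G'`, no spider centre `rᵢ` lies in `S`: its two
leaves would be outside `S` and, after `rᵢ` is swapped for `sᵢ`, `tᵢ` would be undominated. Hence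
`sᵢ, tᵢ ∈ S`, and exactly one of `pᵢ, qᵢ` is in `S`, so `|S| = |S ∩ V| + 3n`. The trace `S ∩ V` is
an independent dominating set of `G`: a vertex `vᵢ` with no dominator in `V` is dominated by `qᵢ`
alone, and then `qᵢ` cannot defend `pᵢ`. Conversely, an independent dominating set `D` of `G`
extends to an independent secure dominating set of `G'` of size `|D| + 3n` by adding `sᵢ, tᵢ`, and
`pᵢ` or `qᵢ` according as `vᵢ ∈ D` or not.
-/

set_option linter.unusedSectionVars false

open Finset

section General

variable {G : SimpleGraph V} {S : Finset V}

lemma DomSet.insert_erase (hS : DomSet G S) {u v : V} (huv : G.Adj u v)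
    (h : ∀ x ∉ S, G.Adj v x → x = u ∨ G.Adj u x ∨ ∃ w ∈ S, w ≠ v ∧ G.Adj w x) :
    DomSet G (insert u (S.erase v)) := by
  intro x
  by_cases hx : x ∈ S
  · by_cases hxv : x = v
    · exact .inr ⟨u, mem_insert_self u _, hxv ▸ huv⟩
    · exact .inl (mem_insert_of_mem (mem_erase.2 ⟨hxv, hx⟩))
  obtain ⟨w, hw, hwx⟩ := (hS x).resolve_left hx
  by_cases hwv : w = v
  · rcases h x hx (hwv ▸ hwx) with rfl | hux | ⟨w', hw', hw'v, hw'x⟩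
    · exact .inl (mem_insert_self x _)
    · exact .inr ⟨u, mem_insert_self u _, hux⟩
    · exact .inr ⟨w', mem_insert_of_mem (mem_erase.2 ⟨hw'v, hw'⟩), hw'x⟩
  · exact .inr ⟨w, mem_insert_of_mem (mem_erase.2 ⟨hwv, hw⟩), hwx⟩

lemma DomSet.mem_of_unique_neighbor_notMem (hS : DomSet G S) {y l : V}
    (hl : ∀ x, G.Adj x l → x = y) (hy : y ∉ S) : l ∈ S :=
  (hS l).resolve_right fun ⟨_, hx, hxl⟩ => hy (hl _ hxl ▸ hx)

lemma InSDS.notMem_of_two_leaves (hS : InSDS G S) {y l₁ l₂ : V} (hne : l₁ ≠ l₂)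
    (h₁ : ∀ x, G.Adj x l₁ ↔ x = y) (h₂ : ∀ x, G.Adj x l₂ ↔ x = y) : y ∉ S := by
  intro hy
  have hl₁ : l₁ ∉ S := fun hl => hS.1 y hy l₁ hl ((h₁ y).2 rfl)
  have hl₂ : l₂ ∉ S := fun hl => hS.1 y hy l₂ hl ((h₂ y).2 rfl)
  obtain ⟨d, -, hd, hdom⟩ := hS.2.2 l₁ hl₁
  obtain rfl : d = y := (h₁ d).1 hd.symm
  rcases hdom l₂ with hmem | ⟨x, hx, hxl⟩
  · exact (mem_insert.1 hmem).elim hne.symm fun h => hl₂ (mem_of_mem_erase h)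
  · obtain rfl := (h₂ x).1 hxl
    rcases mem_insert.1 hx with rfl | hx
    · exact G.irrefl ((h₁ _).2 rfl)
    · exact notMem_erase _ _ hx

lemma InSDS.exists_other_dominator (hS : InSDS G S) {v q p : V} (hq : q ∈ S)
    (hp : ∀ x, G.Adj x p ↔ x = q) (hv : v ∉ S) (hvp : v ≠ p) (hpv : ¬ G.Adj p v) :
    ∃ w ∈ S, w ≠ q ∧ G.Adj w v := by
  have hpS : p ∉ S := fun h => hS.1 q hq p h ((hp q).2 rfl)
  obtain ⟨d, -, hd, hdom⟩ := hS.2.2 p hpS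
  obtain rfl : d = q := (hp d).1 hd.symm
  rcases hdom v with hmem | ⟨w, hw, hwv⟩
  · exact ((mem_insert.1 hmem).elim hvp fun h => hv (mem_of_mem_erase h)).elim
  · rcases mem_insert.1 hw with rfl | hw
    · exact absurd hwv hpv
    · exact ⟨w, mem_of_mem_erase hw, ne_of_mem_erase hw, hwv⟩

end General

section Gadget

variable {G : SimpleGraph V}

@[simp] lemma apxGraph_adj_inl_inl {a b : V} :
    (apxGraph G).Adj (.inl a) (.inl b) ↔ G.Adj a b := by
  simpa [apxGraph, G.adj_comm b a] using fun h : G.Adj a b => G.ne_of_adj h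

@[simp] lemma apxGraph_adj_inl_inr {a b : V} {j : Fin 5} :
    (apxGraph G).Adj (.inl a) (.inr (b, j)) ↔ b = a ∧ (j = 1 ∨ j = 2) := by
  simp only [apxGraph, SimpleGraph.fromRel_adj]; aesop

@[simp] lemma apxGraph_adj_inr_inl {a b : V} {j : Fin 5} :
    (apxGraph G).Adj (.inr (b, j)) (.inl a) ↔ b = a ∧ (j = 1 ∨ j = 2) := by
  rw [SimpleGraph.adj_comm, apxGraph_adj_inl_inr]

@[simp] lemma apxGraph_adj_inr_inr {a b : V} {i j : Fin 5} :
    (apxGraph G).Adj (.inr (a, i)) (.inr (b, j)) ↔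
      a = b ∧ s(i, j) ∈ ({s(0, 1), s(2, 3), s(2, 4)} : Finset (Sym2 (Fin 5))) := by
  simp only [apxGraph, SimpleGraph.fromRel_adj]; aesop

variable {a : V} {x : V ⊕ V × Fin 5}

lemma apxGraph_adj_inl_iff :
    (apxGraph G).Adj x (.inl a) ↔
      (∃ b, x = .inl b ∧ G.Adj b a) ∨ x = .inr (a, 1) ∨ x = .inr (a, 2) := by
  rcases x with b | ⟨b, j⟩
  · simp
  · fin_cases j <;> simp [eq_comm]

lemma apxGraph_adj_inr_zero_iff : (apxGraph G).Adj x (.inr (a, 0)) ↔ x = .inr (a, 1) := by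
  rcases x with b | ⟨b, j⟩
  · simp
  · fin_cases j <;> simp [eq_comm]

lemma apxGraph_adj_inr_one_iff :
    (apxGraph G).Adj x (.inr (a, 1)) ↔ x = .inl a ∨ x = .inr (a, 0) := by
  rcases x with b | ⟨b, j⟩
  · simp [eq_comm]
  · fin_cases j <;> simp [eq_comm]

lemma apxGraph_adj_inr_three_iff : (apxGraph G).Adj x (.inr (a, 3)) ↔ x = .inr (a, 2) := by
  rcases x with b | ⟨b, j⟩
  · simp
  · fin_cases j <;> simp [eq_comm]

lemma apxGraph_adj_inr_four_iff : (apxGraph G).Adj x (.inr (a, 4)) ↔ x = .inr (a, 2) := by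
  rcases x with b | ⟨b, j⟩
  · simp
  · fin_cases j <;> simp [eq_comm]

end Gadget

def IsCanonicalOnGadgets (S : Finset (V ⊕ V × Fin 5)) : Prop :=
  ∀ a : V, (.inr (a, 0) ∈ S ↔ .inr (a, 1) ∉ S) ∧
    .inr (a, 2) ∉ S ∧ .inr (a, 3) ∈ S ∧ .inr (a, 4) ∈ S

lemma IsCanonicalOnGadgets.card_eq {S : Finset (V ⊕ V × Fin 5)} (hS : IsCanonicalOnGadgets S) :
    #S = #S.toLeft + 3 * Fintype.card V := by
  have hfiber (a : V) : ∑ j : Fin 5, (if .inr (a, j) ∈ S then 1 else 0) = 3 := by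
    obtain ⟨h01, h2, h3, h4⟩ := hS a
    rw [Fin.sum_univ_five]
    by_cases h0 : Sum.inr (a, 0) ∈ S
    · simp [h0, h01.1 h0, h2, h3, h4]
    · simp [h0, not_not.1 (mt h01.2 h0), h2, h3, h4]
  have hright : S.toRight = univ.filter fun x => .inr x ∈ S := by ext; simp
  rw [← card_toLeft_add_card_toRight, hright, card_filter, Fintype.sum_prod_type]
  simp [hfiber, mul_comm]

section LowerBound

variable {G : SimpleGraph V} {S : Finset (V ⊕ V × Fin 5)}

lemma InSDS.isCanonicalOnGadgets (hS : InSDS (apxGraph G) S) : IsCanonicalOnGadgets S := by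
  intro a
  have hr : .inr (a, 2) ∉ S := hS.notMem_of_two_leaves (l₁ := .inr (a, 3)) (l₂ := .inr (a, 4))
    (by simp) (fun _ => apxGraph_adj_inr_three_iff) (fun _ => apxGraph_adj_inr_four_iff)
  refine ⟨⟨fun hp hq => hS.1 _ hq _ hp (apxGraph_adj_inr_zero_iff.2 rfl), fun hq => ?_⟩, hr,
    hS.2.1.mem_of_unique_neighbor_notMem (fun _ => apxGraph_adj_inr_three_iff.1) hr,
    hS.2.1.mem_of_unique_neighbor_notMem (fun _ => apxGraph_adj_inr_four_iff.1) hr⟩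
  exact hS.2.1.mem_of_unique_neighbor_notMem (fun _ => apxGraph_adj_inr_zero_iff.1) hq

lemma IndepSet.toLeft (hS : IndepSet (apxGraph G) S) : IndepSet G S.toLeft :=
  fun _ ha _ hb hab => hS _ (mem_toLeft.1 ha) _ (mem_toLeft.1 hb) (apxGraph_adj_inl_inl.2 hab)

lemma InSDS.toLeft_domSet (hS : InSDS (apxGraph G) S) : DomSet G S.toLeft := by
  intro a
  by_contra! h
  obtain ⟨hv, hnb⟩ : .inl a ∉ S ∧ ∀ b, .inl b ∈ S → ¬ G.Adj b a := by simpa using h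
  have hr : .inr (a, 2) ∉ S := (hS.isCanonicalOnGadgets a).2.1
  obtain ⟨w, hw, hwv⟩ := (hS.2.1 (.inl a)).resolve_left hv
  have hq : .inr (a, 1) ∈ S := by
    rcases apxGraph_adj_inl_iff.1 hwv with ⟨b, rfl, hb⟩ | rfl | rfl
    exacts [absurd hb (hnb b hw), hw, absurd hw hr]
  obtain ⟨w', hw', hw'q, hw'v⟩ :=
    hS.exists_other_dominator hq (fun _ => apxGraph_adj_inr_zero_iff) hv (by simp) (by simp)
  rcases apxGraph_adj_inl_iff.1 hw'v with ⟨b, rfl, hb⟩ | rfl | rfl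
  exacts [hnb b hw' hb, hw'q rfl, hr hw']

end LowerBound

section UpperBound

variable {G : SimpleGraph V} {D : Finset V}

def apxLift (D : Finset V) : Finset (V ⊕ V × Fin 5) :=
  D.disjSum (univ.filter fun x => x.2 = (if x.1 ∈ D then 0 else 1) ∨ x.2 = 3 ∨ x.2 = 4)

@[simp] lemma inl_mem_apxLift {a : V} : .inl a ∈ apxLift D ↔ a ∈ D := inl_mem_disjSum

@[simp] lemma inr_mem_apxLift {a : V} {j : Fin 5} :
    .inr (a, j) ∈ apxLift D ↔ j = (if a ∈ D then 0 else 1) ∨ j = 3 ∨ j = 4 := by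
  simp [apxLift]

@[simp] lemma toLeft_apxLift : (apxLift D).toLeft = D := toLeft_disjSum

lemma isCanonicalOnGadgets_apxLift : IsCanonicalOnGadgets (apxLift D) := by
  intro a
  by_cases ha : a ∈ D <;> simp [ha]

lemma IndepSet.apxLift (hD : IndepSet G D) : IndepSet (apxGraph G) (apxLift D) := by
  rintro (a | ⟨a, i⟩) ha (b | ⟨b, j⟩) hb hab
  · exact hD a (by simpa using ha) b (by simpa using hb) (by simpa using hab)
  all_goals
    simp only [inl_mem_apxLift, inr_mem_apxLift, apxGraph_adj_inl_inr, apxGraph_adj_inr_inl,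
      apxGraph_adj_inr_inr, mem_insert, mem_singleton, Sym2.eq, Sym2.rel_iff', Prod.mk.injEq,
      Prod.swap_prod_mk] at ha hb hab
    grind

lemma domSet_apxLift : DomSet (apxGraph G) (apxLift D) := by
  rintro (a | ⟨a, j⟩)
  · by_cases ha : a ∈ D
    · exact .inl (by simpa)
    · exact .inr ⟨.inr (a, 1), by simp [ha], by simp⟩
  · fin_cases j
    · by_cases ha : a ∈ D
      · exact .inl (by simp [ha])
      · exact .inr ⟨.inr (a, 1), by simp [ha], by simp⟩
    · by_cases ha : a ∈ D
      · exact .inr ⟨.inr (a, 0), by simp [ha], by simp⟩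
      · exact .inl (by simp [ha])
    · exact .inr ⟨.inr (a, 3), by simp, by simp⟩
    · exact .inl (by simp)
    · exact .inl (by simp)

lemma DomSet.secDomSet_apxLift (hD : DomSet G D) : SecDomSet (apxGraph G) (apxLift D) := by
  refine ⟨domSet_apxLift, ?_⟩
  rintro (a | ⟨a, j⟩) hu
  · have ha : a ∉ D := by simpa using hu
    obtain ⟨w, hw, hwa⟩ := (hD a).resolve_left ha
    have haw : (apxGraph G).Adj (.inl a) (.inl w) := by simpa using hwa.symm
    refine ⟨.inl w, by simpa, haw, domSet_apxLift.insert_erase haw fun x hx hwx => ?_⟩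
    rcases apxGraph_adj_inl_iff.1 hwx.symm with ⟨b, rfl, hb⟩ | rfl | rfl
    · by_cases hba : b = a
      · exact .inl (hba ▸ rfl)
      · exact .inr (.inr ⟨.inr (b, 1), by simpa using hx, by simp, by simp⟩)
    · exact .inr (.inr ⟨.inr (w, 0), by simp [hw], by simp, by simp⟩)
    · exact .inr (.inr ⟨.inr (w, 3), by simp, by simp, by simp⟩)
  · fin_cases j
    · have ha : a ∉ D := by simpa using hu
      obtain ⟨w, hw, hwa⟩ := (hD a).resolve_left ha
      refine ⟨.inr (a, 1), by simp [ha], by simp, domSet_apxLift.insert_erase (by simp)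
        fun x _ hx => ?_⟩
      rcases apxGraph_adj_inr_one_iff.1 hx.symm with rfl | rfl
      · exact .inr (.inr ⟨.inl w, by simpa, by simp, by simpa⟩)
      · exact .inl rfl
    · have ha : a ∈ D := by simpa using hu
      refine ⟨.inr (a, 0), by simp [ha], by simp, domSet_apxLift.insert_erase (by simp)
        fun x _ hx => .inl (apxGraph_adj_inr_zero_iff.1 hx.symm)⟩
    · refine ⟨.inr (a, 3), by simp, by simp, domSet_apxLift.insert_erase (by simp)
        fun x _ hx => .inl (apxGraph_adj_inr_three_iff.1 hx.symm)⟩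
    · simp at hu
    · simp at hu

end UpperBound

theorem stmt19_general (G : SimpleGraph V)
    (n : ℕ) (hn : Fintype.card V = n)
    (D : Finset V) (hDind : IndepSet G D) (hDdom : DomSet G D)
    (hDmin : ∀ D' : Finset V, IndepSet G D' → DomSet G D' → D.card ≤ D'.card)
    (S : Finset (V ⊕ V × Fin 5)) (hS : InSDS (apxGraph G) S)
    (hSmin : ∀ S' : Finset (V ⊕ V × Fin 5), InSDS (apxGraph G) S' → S.card ≤ S'.card) :
    S.card = D.card + 3 * n := by
  have hupper := hSmin _ ⟨hDind.apxLift, hDdom.secDomSet_apxLift⟩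
  have hlower := hDmin _ hS.1.toLeft hS.toLeft_domSet
  rw [isCanonicalOnGadgets_apxLift.card_eq, toLeft_apxLift] at hupper
  rw [hS.isCanonicalOnGadgets.card_eq] at hupper ⊢
  omega

theorem stmt19 (G : SimpleGraph V) [DecidableRel G.Adj] (hdeg : G.maxDegree ≤ 3)
    (n : ℕ) (hn : Fintype.card V = n)
    (D : Finset V) (hDind : IndepSet G D) (hDdom : DomSet G D)
    (hDmin : ∀ D' : Finset V, IndepSet G D' → DomSet G D' → D.card ≤ D'.card)
    (S : Finset (V ⊕ V × Fin 5)) (hS : InSDS (apxGraph G) S)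
    (hSmin : ∀ S' : Finset (V ⊕ V × Fin 5), InSDS (apxGraph G) S' → S.card ≤ S'.card) :
    S.card = D.card + 3 * n :=
  stmt19_general G n hn D hDind hDdom hDmin S hS hSmin
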